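/- arXiv:2401.11677 — 4 statements merged into one kernel-verified Lean document; each statement's English description precedes it below -/
import Mathlib

section
/- Let φ solve φ' = -2Lφ - γ(φ² + 1) on [0, τ*] with L ≥ 0, γ > 0. Suppose V : ℝⁿ → ℝ is C¹ with ⟨∇V(x), f(x,e)⟩ ≤ -ρ₀(x) - H(x)² - θ(W(e)) + γ²·W(e)², and W : ℝᵐ → ℝ₊ is C¹ with ⟨∇W(e), g(x,e)⟩ ≤ L·W(e) + H(x). Define U(x,e,τ) = V(x) + γ·φ(τ)·W(e)². Then along any solution of ẋ = f(x,e), ė = g(x,e), τ̇ = 1 with τ ∈ [0, τ*], the derivative of U satisfies d/dt U ≤ -ρ₀(x) - θ(W(e)) - (H(x) - γ·φ(τ)·W(e))² ≤ -ρ₀(x) - θ(W(e)). -/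
open Set

/-!
Differentiate `U = V(x) + γ φ W(e)²` by the product rule and insert the two dissipation
bounds; the cross term `2γφW·dW` is bounded using `γφW ≥ 0`. The Riccati equation for `φ`
is chosen precisely so that the resulting quadratic in `H` and `W` completes to the square
`-(H - γφW)²`.
-/

theorem HasDerivAt.add_const_mul_mul_sq {v p w : ℝ → ℝ} {dv dp dw t : ℝ} (c : ℝ)
    (hv : HasDerivAt v dv t) (hp : HasDerivAt p dp t) (hw : HasDerivAt w dw t) :
    HasDerivAt (fun s => v s + c * p s * w s ^ 2)
      (dv + c * (dp * w t ^ 2 + 2 * p t * w t * dw)) t := by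
  refine (hv.fun_add ((hp.const_mul c).fun_mul (hw.fun_pow 2))).congr_deriv ?_
  norm_num
  ring

theorem riccati_neg_sq (L γ φ W H : ℝ) :
    -H ^ 2 + γ ^ 2 * W ^ 2 + γ * (-2 * L * φ - γ * (φ ^ 2 + 1)) * W ^ 2
      + 2 * γ * φ * W * (L * W + H) = -(H - γ * φ * W) ^ 2 := by
  ring

theorem lyapunov_rate_le {L γ φ W H ρ θ dV dW : ℝ}
    (hγ : 0 ≤ γ) (hφ : 0 ≤ φ) (hW : 0 ≤ W)
    (hdV : dV ≤ -ρ - H ^ 2 - θ + γ ^ 2 * W ^ 2) (hdW : dW ≤ L * W + H) :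
    dV + γ * ((-2 * L * φ - γ * (φ ^ 2 + 1)) * W ^ 2 + 2 * φ * W * dW)
      ≤ -ρ - θ - (H - γ * φ * W) ^ 2 := by
  have hcross : 2 * γ * φ * W * dW ≤ 2 * γ * φ * W * (L * W + H) :=
    mul_le_mul_of_nonneg_left hdW (by positivity)
  calc dV + γ * ((-2 * L * φ - γ * (φ ^ 2 + 1)) * W ^ 2 + 2 * φ * W * dW)
      ≤ (-ρ - H ^ 2 - θ + γ ^ 2 * W ^ 2) + γ * (-2 * L * φ - γ * (φ ^ 2 + 1)) * W ^ 2
          + 2 * γ * φ * W * (L * W + H) := by linarith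
    _ = -ρ - θ - (H - γ * φ * W) ^ 2 := by linear_combination riccati_neg_sq L γ φ W H

theorem lyapunov_flow_decrease_general
    {α β : Type*} (τs L γ : ℝ)
    (φ : ℝ → ℝ) (x : ℝ → α) (e : ℝ → β)
    (V H ρ₀ : α → ℝ) (W : β → ℝ) (θ : ℝ → ℝ)
    (dV dW : ℝ → ℝ)
    (hγ : 0 < γ)
    (hφode : ∀ t ∈ Icc (0 : ℝ) τs,
      HasDerivAt φ (-2 * L * φ t - γ * ((φ t) ^ 2 + 1)) t)
    (hφpos : ∀ t ∈ Icc (0 : ℝ) τs, 0 ≤ φ t)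
    (hWpos : ∀ b, 0 ≤ W b)
    (hV : ∀ t ∈ Icc (0 : ℝ) τs, HasDerivAt (fun s => V (x s)) (dV t) t)
    (hVbound : ∀ t ∈ Icc (0 : ℝ) τs,
      dV t ≤ -ρ₀ (x t) - (H (x t)) ^ 2 - θ (W (e t)) + γ ^ 2 * (W (e t)) ^ 2)
    (hW : ∀ t ∈ Icc (0 : ℝ) τs, HasDerivAt (fun s => W (e s)) (dW t) t)
    (hWbound : ∀ t ∈ Icc (0 : ℝ) τs, dW t ≤ L * W (e t) + H (x t)) :
    ∀ t ∈ Icc (0 : ℝ) τs, ∃ dU : ℝ,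
      HasDerivAt (fun s => V (x s) + γ * φ s * (W (e s)) ^ 2) dU t ∧
      dU ≤ -ρ₀ (x t) - θ (W (e t)) - (H (x t) - γ * φ t * W (e t)) ^ 2 ∧
      dU ≤ -ρ₀ (x t) - θ (W (e t)) := by
  intro t ht
  have hrate := lyapunov_rate_le hγ.le (hφpos t ht) (hWpos (e t)) (hVbound t ht) (hWbound t ht)
  refine ⟨_, (hV t ht).add_const_mul_mul_sq γ (hφode t ht) (hW t ht), hrate, ?_⟩
  linarith [sq_nonneg (H (x t) - γ * φ t * W (e t))]

/-- Decrease of the Lyapunov function `U(x,e,τ) = V(x) + γ·φ(τ)·W(e)²` along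
flows of the networked control system. -/
theorem lyapunov_flow_decrease
    {α β : Type*} (τs L γ : ℝ)
    (φ : ℝ → ℝ) (x : ℝ → α) (e : ℝ → β)
    (V H ρ₀ : α → ℝ) (W : β → ℝ) (θ : ℝ → ℝ)
    (dV dW : ℝ → ℝ)
    (hL : 0 ≤ L) (hγ : 0 < γ) (hτs : 0 < τs)
    (hφode : ∀ t ∈ Icc (0 : ℝ) τs,
      HasDerivAt φ (-2 * L * φ t - γ * ((φ t) ^ 2 + 1)) t)
    (hφpos : ∀ t ∈ Icc (0 : ℝ) τs, 0 ≤ φ t)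
    (hWpos : ∀ b, 0 ≤ W b)
    (hV : ∀ t ∈ Icc (0 : ℝ) τs, HasDerivAt (fun s => V (x s)) (dV t) t)
    (hVbound : ∀ t ∈ Icc (0 : ℝ) τs,
      dV t ≤ -ρ₀ (x t) - (H (x t)) ^ 2 - θ (W (e t)) + γ ^ 2 * (W (e t)) ^ 2)
    (hW : ∀ t ∈ Icc (0 : ℝ) τs, HasDerivAt (fun s => W (e s)) (dW t) t)
    (hWbound : ∀ t ∈ Icc (0 : ℝ) τs, dW t ≤ L * W (e t) + H (x t)) :
    ∀ t ∈ Icc (0 : ℝ) τs, ∃ dU : ℝ,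
      HasDerivAt (fun s => V (x s) + γ * φ s * (W (e s)) ^ 2) dU t ∧
      dU ≤ -ρ₀ (x t) - θ (W (e t)) - (H (x t) - γ * φ t * W (e t)) ^ 2 ∧
      dU ≤ -ρ₀ (x t) - θ (W (e t)) :=
  lyapunov_flow_decrease_general τs L γ φ x e V H ρ₀ W θ dV dW hγ hφode hφpos hWpos hV hVbound hW
    hWbound
end

section
/- With U(x,e,τ,κ) = V(x) + γ·φ(τ)·W(κ,e)², φ(0) = ρ⁻¹, and assumptions W(κ+1, h(κ,e)) ≤ ρ·W(κ,e) (success, probability P_s), W(κ+1, e') ≤ λ·W(κ,e) (failure, probability P_f), and φ(τ) ≥ (ρ²·P_s + λ²·P_f)·φ(0) for all τ ∈ [τ_miati, τ_mati], the expected value of U after a random jump (which resets τ to 0 and increments κ) satisfies E[U⁺] ≤ V(x) + (ρ²·P_s + λ²·P_f)·γ·φ(0)·W(κ,e)² ≤ U(x,e,τ,κ). -/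
open Set

/-- Expected non-increase of `U(x,e,τ,κ) = V(x) + γ·φ(τ)·W(κ,e)²` at a random
jump of the networked control system (success with probability `Ps`, failure
with probability `Pf`). -/
theorem lyapunov_jump_expected_nonincrease
    {α β : Type*} (V : α → ℝ) (W : ℕ → β → ℝ) (h : ℕ → β → β)
    (φ : ℝ → ℝ) (γ ρ lam Ps Pf τm τM : ℝ) (x : α) (e e' : β) (κ : ℕ)
    (hγ : 0 < γ) (hρ0 : 0 < ρ) (hρ1 : ρ < 1) (hlam : 1 ≤ lam)
    (hPs0 : 0 < Ps) (hPs1 : Ps < 1) (hPf : Pf = 1 - Ps)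
    (hφ0 : φ 0 = ρ⁻¹)
    (hWpos : ∀ j b, 0 ≤ W j b)
    (hsucc : W (κ + 1) (h κ e) ≤ ρ * W κ e)
    (hfail : W (κ + 1) e' ≤ lam * W κ e)
    (hφ : ∀ τ ∈ Icc τm τM, (ρ ^ 2 * Ps + lam ^ 2 * Pf) * φ 0 ≤ φ τ) :
    ∀ τ ∈ Icc τm τM,
      Ps * (V x + γ * φ 0 * (W (κ + 1) (h κ e)) ^ 2) +
        Pf * (V x + γ * φ 0 * (W (κ + 1) e') ^ 2) ≤
          V x + (ρ ^ 2 * Ps + lam ^ 2 * Pf) * γ * φ 0 * (W κ e) ^ 2 ∧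
      V x + (ρ ^ 2 * Ps + lam ^ 2 * Pf) * γ * φ 0 * (W κ e) ^ 2 ≤
        V x + γ * φ τ * (W κ e) ^ 2 := by
  subst hPf
  intro τ hτ
  have hφ0pos : 0 < φ 0 := by rw [hφ0]; positivity
  have hPfpos : (0:ℝ) < 1 - Ps := by linarith
  have hWκ := hWpos κ e
  have hs2 : (W (κ + 1) (h κ e)) ^ 2 ≤ ρ ^ 2 * (W κ e) ^ 2 := by
    have := mul_self_le_mul_self (hWpos (κ+1) (h κ e)) hsucc
    nlinarith
  have hf2 : (W (κ + 1) e') ^ 2 ≤ lam ^ 2 * (W κ e) ^ 2 := by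
    have := mul_self_le_mul_self (hWpos (κ+1) e') hfail
    nlinarith
  constructor
  · have h1 := mul_le_mul_of_nonneg_left hs2 hPs0.le
    have h2 := mul_le_mul_of_nonneg_left hf2 hPfpos.le
    have h3 := mul_le_mul_of_nonneg_left (add_le_add h1 h2) (mul_pos hγ hφ0pos).le
    nlinarith [h3]
  · have hφτ := hφ τ hτ
    nlinarith [sq_nonneg (W κ e), mul_le_mul_of_nonneg_left hφτ hγ.le]
end

section
/- For the Round-Robin protocol with ℓ nodes, the function W(i,e) = √(Σ_{k=i}^{∞} |φ(k,i,e)|²), where φ(k,i,e) is the solution at time k of the RR error recursion starting from e at time i, satisfies |e| ≤ W(i,e) ≤ √ℓ·|e| and W(i+1, h(i,e)) ≤ √((ℓ-1)/ℓ)·W(i,e) for all i and e. -/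
open Set

/-- Round-Robin update: at time `i` the component `i % ℓ` of the error is
reset to zero. -/
noncomputable def rrH (ℓ : ℕ) (i : ℕ) (e : EuclideanSpace ℝ (Fin ℓ)) :
    EuclideanSpace ℝ (Fin ℓ) :=
  WithLp.toLp 2 (fun j : Fin ℓ => if (j : ℕ) = i % ℓ then 0 else e j)

/-- `rrSol ℓ i e n` is the solution of the Round-Robin error recursion after
`n` steps, starting from `e` at time `i` (i.e. `φ(i+n, i, e)`). -/
noncomputable def rrSol (ℓ : ℕ) (i : ℕ) (e : EuclideanSpace ℝ (Fin ℓ)) :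
    ℕ → EuclideanSpace ℝ (Fin ℓ)
  | 0 => e
  | n + 1 => rrH ℓ (i + n) (rrSol ℓ i e n)

/-- The Round-Robin Lyapunov function
`W(i,e) = √(Σ_{k=i}^{∞} |φ(k,i,e)|²)`. -/
noncomputable def rrW (ℓ : ℕ) (i : ℕ) (e : EuclideanSpace ℝ (Fin ℓ)) : ℝ :=
  Real.sqrt (∑' n : ℕ, ‖rrSol ℓ i e n‖ ^ 2)

/-!
Every trajectory of the Round-Robin recursion has non-increasing norm and vanishes after `ℓ`
steps, since each of the `ℓ` components is reset once among any `ℓ` consecutive transmissions.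
Hence `W(i,e)²` is a sum of at most `ℓ` terms, the first being `|e|²` and each at most `|e|²`.
The trajectory from `h(i,e)` at time `i + 1` is the tail of the one from `e` at time `i`, so
`W(i+1, h(i,e))² = W(i,e)² - |e|² ≤ W(i,e)² - W(i,e)²/ℓ`.
-/

theorem Nat.exists_lt_add_mod_eq {ℓ j : ℕ} (hj : j < ℓ) (i : ℕ) :
    ∃ m < ℓ, (i + m) % ℓ = j := by
  have hiℓ : i % ℓ < ℓ := Nat.mod_lt i (by omega)
  refine ⟨(j + (ℓ - i % ℓ)) % ℓ, Nat.mod_lt _ (by omega), ?_⟩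
  have hmod : i + (j + (ℓ - i % ℓ)) % ℓ ≡ i % ℓ + (j + (ℓ - i % ℓ)) [MOD ℓ] :=
    (Nat.mod_modEq i ℓ).symm.add (Nat.mod_modEq _ ℓ)
  rw [Nat.ModEq, show i % ℓ + (j + (ℓ - i % ℓ)) = j + ℓ by omega, Nat.add_mod_right,
    Nat.mod_eq_of_lt hj] at hmod
  exact hmod

theorem sub_le_div_mul_of_le_mul {x y c : ℝ} (hy : 0 ≤ y) (hc : 0 ≤ c) (h : x ≤ c * y) :
    x - y ≤ (c - 1) / c * x := by
  rcases hc.eq_or_lt with rfl | hc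
  · simp only [zero_mul, div_zero] at h ⊢
    linarith
  · rw [sub_div, div_self hc.ne', sub_mul, one_mul, sub_le_sub_iff_left, div_mul_eq_mul_div,
      one_mul, div_le_iff₀ hc, mul_comm]
    exact h

section RoundRobin

variable {ℓ : ℕ}

theorem rrH_apply (i : ℕ) (e : EuclideanSpace ℝ (Fin ℓ)) (j : Fin ℓ) :
    rrH ℓ i e j = if (j : ℕ) = i % ℓ then 0 else e j :=
  rfl

theorem norm_rrH_le (i : ℕ) (e : EuclideanSpace ℝ (Fin ℓ)) : ‖rrH ℓ i e‖ ≤ ‖e‖ := by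
  rw [EuclideanSpace.norm_eq, EuclideanSpace.norm_eq]
  gcongr with j
  rw [rrH_apply]
  split_ifs
  · simp
  · rfl

theorem norm_rrSol_le (i : ℕ) (e : EuclideanSpace ℝ (Fin ℓ)) (n : ℕ) :
    ‖rrSol ℓ i e n‖ ≤ ‖e‖ := by
  induction n with
  | zero => rfl
  | succ n ih => exact (norm_rrH_le _ _).trans ih

theorem rrSol_rrH (i : ℕ) (e : EuclideanSpace ℝ (Fin ℓ)) (n : ℕ) :
    rrSol ℓ (i + 1) (rrH ℓ i e) n = rrSol ℓ i e (n + 1) := by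
  induction n with
  | zero => rfl
  | succ n ih => rw [rrSol, ih, Nat.add_right_comm]; rfl

theorem rrSol_apply_eq_zero {i m n : ℕ} (e : EuclideanSpace ℝ (Fin ℓ)) {j : Fin ℓ}
    (hmn : m < n) (hj : (i + m) % ℓ = j) : rrSol ℓ i e n j = 0 := by
  induction n with
  | zero => omega
  | succ n ih =>
    rw [rrSol, rrH_apply]
    split_ifs with hreset
    · rfl
    · rcases Nat.lt_succ_iff_lt_or_eq.mp hmn with hmn | rfl
      · exact ih hmn
      · exact absurd hj.symm hreset

theorem rrSol_eq_zero_of_le (i : ℕ) (e : EuclideanSpace ℝ (Fin ℓ)) {n : ℕ} (hn : ℓ ≤ n) :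
    rrSol ℓ i e n = 0 := by
  ext j
  obtain ⟨m, hm, hj⟩ := Nat.exists_lt_add_mod_eq j.isLt i
  exact rrSol_apply_eq_zero e (hm.trans_le hn) hj

theorem hasSum_norm_rrSol_sq (i : ℕ) (e : EuclideanSpace ℝ (Fin ℓ)) :
    HasSum (fun n => ‖rrSol ℓ i e n‖ ^ 2) (∑ n ∈ Finset.range ℓ, ‖rrSol ℓ i e n‖ ^ 2) :=
  hasSum_sum_of_ne_finset_zero fun n hn => by
    rw [rrSol_eq_zero_of_le i e (not_lt.mp (Finset.mem_range.not.mp hn)), norm_zero,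
      zero_pow two_ne_zero]

theorem sq_norm_le_tsum_norm_rrSol_sq (i : ℕ) (e : EuclideanSpace ℝ (Fin ℓ)) :
    ‖e‖ ^ 2 ≤ ∑' n, ‖rrSol ℓ i e n‖ ^ 2 :=
  (hasSum_norm_rrSol_sq i e).summable.le_tsum 0 fun _ _ => sq_nonneg _

theorem tsum_norm_rrSol_sq_le (i : ℕ) (e : EuclideanSpace ℝ (Fin ℓ)) :
    ∑' n, ‖rrSol ℓ i e n‖ ^ 2 ≤ ℓ * ‖e‖ ^ 2 := by
  rw [(hasSum_norm_rrSol_sq i e).tsum_eq]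
  calc ∑ n ∈ Finset.range ℓ, ‖rrSol ℓ i e n‖ ^ 2
      ≤ ∑ _n ∈ Finset.range ℓ, ‖e‖ ^ 2 := by gcongr with n; exact norm_rrSol_le i e n
    _ = ℓ * ‖e‖ ^ 2 := by rw [Finset.sum_const, Finset.card_range, nsmul_eq_mul]

theorem tsum_norm_rrSol_rrH_sq (i : ℕ) (e : EuclideanSpace ℝ (Fin ℓ)) :
    ∑' n, ‖rrSol ℓ (i + 1) (rrH ℓ i e) n‖ ^ 2 = ∑' n, ‖rrSol ℓ i e n‖ ^ 2 - ‖e‖ ^ 2 := by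
  rw [(hasSum_norm_rrSol_sq i e).summable.tsum_eq_zero_add]
  simp only [rrSol_rrH, rrSol, add_sub_cancel_left]

end RoundRobin

theorem roundRobin_lyapunov_general
    (ℓ : ℕ) (i : ℕ) (e : EuclideanSpace ℝ (Fin ℓ)) :
    ‖e‖ ≤ rrW ℓ i e ∧
    rrW ℓ i e ≤ Real.sqrt ℓ * ‖e‖ ∧
    rrW ℓ (i + 1) (rrH ℓ i e) ≤ Real.sqrt (((ℓ : ℝ) - 1) / ℓ) * rrW ℓ i e := by
  set T := ∑' n, ‖rrSol ℓ i e n‖ ^ 2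
  have hlower : ‖e‖ ^ 2 ≤ T := sq_norm_le_tsum_norm_rrSol_sq i e
  have hupper : T ≤ ℓ * ‖e‖ ^ 2 := tsum_norm_rrSol_sq_le i e
  refine ⟨Real.le_sqrt_of_sq_le hlower, ?_, ?_⟩
  · calc Real.sqrt T ≤ Real.sqrt (ℓ * ‖e‖ ^ 2) := Real.sqrt_le_sqrt hupper
      _ = Real.sqrt ℓ * ‖e‖ := by rw [Real.sqrt_mul' _ (sq_nonneg _), Real.sqrt_sq (norm_nonneg e)]
  · calc rrW ℓ (i + 1) (rrH ℓ i e) = Real.sqrt (T - ‖e‖ ^ 2) := by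
          rw [rrW, tsum_norm_rrSol_rrH_sq]
      _ ≤ Real.sqrt ((ℓ - 1) / ℓ * T) :=
          Real.sqrt_le_sqrt (sub_le_div_mul_of_le_mul (sq_nonneg _) (Nat.cast_nonneg ℓ) hupper)
      _ = Real.sqrt ((ℓ - 1) / ℓ) * Real.sqrt T := Real.sqrt_mul' _ (hlower.trans' (sq_nonneg _))

/-- Lyapunov properties of the Round-Robin protocol:
`|e| ≤ W(i,e) ≤ √ℓ·|e|` and `W(i+1, h(i,e)) ≤ √((ℓ-1)/ℓ)·W(i,e)`. -/
theorem roundRobin_lyapunov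
    (ℓ : ℕ) (hℓ : 1 ≤ ℓ) (i : ℕ) (e : EuclideanSpace ℝ (Fin ℓ)) :
    ‖e‖ ≤ rrW ℓ i e ∧
    rrW ℓ i e ≤ Real.sqrt ℓ * ‖e‖ ∧
    rrW ℓ (i + 1) (rrH ℓ i e) ≤ Real.sqrt (((ℓ : ℝ) - 1) / ℓ) * rrW ℓ i e :=
  roundRobin_lyapunov_general ℓ i e
end

section
/- Let A be a hybrid time domain (a union of intervals [t_j, t_{j+1}] × {j} with 0 = t₀ ≤ t₁ ≤ …) on which consecutive jump times satisfy t_{j+1} - t_j ≥ τ_miati > 0 for all j. Suppose u : A → ℝ₊ satisfies: u is strictly decreasing in t on each interval where u > 0 (specifically d/dt u ≤ -φ(u) for some continuous positive-definite φ), and u(t_{j+1}, j+1) ≤ u(t_{j+1}, j) at each jump. Then for every ε > 0 and every initial bound u(0,0) ≤ M there exists T such that u(t,j) < ε for all (t,j) ∈ A with t + j ≥ T. -/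
open Set Filter

/-- Mean-value-type bound on a closed interval from `HasDerivWithinAt`. -/
lemma aux_decrease {a b C : ℝ} {f f' : ℝ → ℝ}
    (hderiv : ∀ x ∈ Icc a b, HasDerivWithinAt f (f' x) (Icc a b) x)
    (hbound : ∀ x ∈ Ioo a b, f' x ≤ C) :
    ∀ x ∈ Icc a b, ∀ y ∈ Icc a b, x ≤ y → f y - f x ≤ C * (y - x) := by
  have hconv : Convex ℝ (Icc a b) := convex_Icc a b
  have hcont : ContinuousOn f (Icc a b) := fun x hx => (hderiv x hx).continuousWithinAt
  have hdiff : DifferentiableOn ℝ f (interior (Icc a b)) := by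
    intro x hx
    rw [interior_Icc] at hx
    exact ((hderiv x (Ioo_subset_Icc_self hx)).hasDerivAt
      (Icc_mem_nhds hx.1 hx.2)).differentiableAt.differentiableWithinAt
  have hb : ∀ x ∈ interior (Icc a b), deriv f x ≤ C := by
    intro x hx
    rw [interior_Icc] at hx
    rw [((hderiv x (Ioo_subset_Icc_self hx)).hasDerivAt (Icc_mem_nhds hx.1 hx.2)).deriv]
    exact hbound x hx
  exact fun x hx y hy hxy => hconv.image_sub_le_mul_sub_of_deriv_le hcont hdiff hb x hx y hy hxy

/-- Deterministic attractivity on a hybrid time domain: strict flow decrease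
(`d/dt u ≤ -φ(u)` with `φ` positive definite), non-increase at jumps, and a
uniform dwell time `τm > 0` between jumps imply uniform convergence of `u`
to zero. -/
theorem hybrid_dwell_time_attractivity
    (t : ℕ → ℝ) (u : ℝ → ℕ → ℝ) (du : ℝ → ℕ → ℝ) (φ : ℝ → ℝ) (τm : ℝ)
    (ht0 : t 0 = 0) (hτm : 0 < τm)
    (hdwell : ∀ j, τm ≤ t (j + 1) - t j)
    (hφcont : Continuous φ) (hφ0 : φ 0 = 0) (hφpos : ∀ s : ℝ, 0 < s → 0 < φ s)
    (hunonneg : ∀ j, ∀ s ∈ Icc (t j) (t (j + 1)), 0 ≤ u s j)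
    (hflow : ∀ j, ∀ s ∈ Icc (t j) (t (j + 1)),
      HasDerivWithinAt (fun r => u r j) (du s j) (Icc (t j) (t (j + 1))) s ∧
        du s j ≤ -φ (u s j))
    (hjump : ∀ j, u (t (j + 1)) (j + 1) ≤ u (t (j + 1)) j) :
    ∀ ε : ℝ, 0 < ε → ∀ M : ℝ, u 0 0 ≤ M →
      ∃ T : ℝ, ∀ j : ℕ, ∀ s ∈ Icc (t j) (t (j + 1)),
        T ≤ s + (j : ℝ) → u s j < ε := by
  intro ε hε M hM
  have hφnn : ∀ s : ℝ, 0 ≤ s → 0 ≤ φ s := by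
    intro s hs
    rcases hs.eq_or_lt with h | h
    · rw [← h, hφ0]
    · exact (hφpos s h).le
  have htmono : ∀ j, t j ≤ t (j + 1) := fun j => by linarith [hdwell j]
  -- u is antitone on each interval
  have hanti : ∀ j, ∀ x ∈ Icc (t j) (t (j + 1)), ∀ y ∈ Icc (t j) (t (j + 1)),
      x ≤ y → u y j ≤ u x j := by
    intro j x hx y hy hxy
    have := aux_decrease (f := fun r => u r j) (f' := fun r => du r j) (C := 0)
      (fun z hz => (hflow j z hz).1)
      (fun z hz => by
        have h1 := (hflow j z (Ioo_subset_Icc_self hz)).2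
        have h2 := hφnn _ (hunonneg j z (Ioo_subset_Icc_self hz))
        linarith) x hx y hy hxy
    linarith
  -- start values bounded by M
  have huM : ∀ j, u (t j) j ≤ M := by
    intro j
    induction j with
    | zero => rw [ht0]; exact hM
    | succ k ih =>
      have h1 := hjump k
      have h2 := hanti k (t k) ⟨le_refl _, htmono k⟩ (t (k + 1)) ⟨htmono k, le_refl _⟩ (htmono k)
      linarith
  by_cases hεM : M < ε
  · refine ⟨0, fun j s hs _ => ?_⟩
    have := hanti j (t j) ⟨le_refl _, htmono j⟩ s hs hs.1
    linarith [huM j]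
  push_neg at hεM
  -- minimum δ of φ on [ε, M]
  obtain ⟨c, hc, hcmin⟩ := isCompact_Icc.exists_isMinOn (s := Icc ε M)
    (nonempty_Icc.mpr hεM) hφcont.continuousOn
  set δ := φ c with hδdef
  have hδ : 0 < δ := hφpos c (lt_of_lt_of_le hε hc.1)
  -- key quantitative decrease
  have hkey : ∀ j, ∀ s ∈ Icc (t j) (t (j + 1)), ε ≤ u s j → u s j ≤ M - δ * s := by
    intro j
    induction j with
    | zero =>
      intro s hs hεu
      have hstart : u (t 0) 0 ≤ M := huM 0
      have hbound : ∀ x ∈ Ioo (t 0) s, du x 0 ≤ -δ := by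
        intro x hx
        have hxI : x ∈ Icc (t 0) (t 1) := ⟨hx.1.le, hx.2.le.trans hs.2⟩
        have hux_ge : ε ≤ u x 0 :=
          le_trans hεu (hanti 0 x hxI s hs hx.2.le)
        have hux_le : u x 0 ≤ M :=
          le_trans (hanti 0 (t 0) ⟨le_refl _, htmono 0⟩ x hxI hx.1.le) (huM 0)
        have hmin := hcmin ⟨hux_ge, hux_le⟩
        have := (hflow 0 x hxI).2
        simp only [Set.mem_setOf_eq] at hmin
        linarith
      have := aux_decrease (a := t 0) (b := s) (f := fun r => u r 0)
        (f' := fun r => du r 0) (C := -δ)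
        (fun z hz => ((hflow 0 z ⟨hz.1, hz.2.trans hs.2⟩).1).mono
          (Icc_subset_Icc le_rfl hs.2))
        hbound (t 0) ⟨le_refl _, hs.1⟩ s ⟨hs.1, le_refl _⟩ hs.1
      rw [ht0] at this hstart
      nlinarith
    | succ k ih =>
      intro s hs hεu
      have hstart0 : ε ≤ u (t (k + 1)) (k + 1) :=
        le_trans hεu (hanti (k + 1) (t (k + 1)) ⟨le_refl _, htmono (k + 1)⟩ s hs hs.1)
      have hstart1 : ε ≤ u (t (k + 1)) k := le_trans hstart0 (hjump k)
      have hprev : u (t (k + 1)) k ≤ M - δ * t (k + 1) :=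
        ih (t (k + 1)) ⟨htmono k, le_refl _⟩ hstart1
      have hstart : u (t (k + 1)) (k + 1) ≤ M - δ * t (k + 1) :=
        le_trans (hjump k) hprev
      have hbound : ∀ x ∈ Ioo (t (k + 1)) s, du x (k + 1) ≤ -δ := by
        intro x hx
        have hxI : x ∈ Icc (t (k + 1)) (t (k + 2)) := ⟨hx.1.le, hx.2.le.trans hs.2⟩
        have hux_ge : ε ≤ u x (k + 1) :=
          le_trans hεu (hanti (k + 1) x hxI s hs hx.2.le)
        have hux_le : u x (k + 1) ≤ M :=
          le_trans (hanti (k + 1) (t (k + 1)) ⟨le_refl _, htmono (k + 1)⟩ x hxI hx.1.le)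
            (huM (k + 1))
        have hmin := hcmin ⟨hux_ge, hux_le⟩
        have := (hflow (k + 1) x hxI).2
        simp only [Set.mem_setOf_eq] at hmin
        linarith
      have := aux_decrease (a := t (k + 1)) (b := s) (f := fun r => u r (k + 1))
        (f' := fun r => du r (k + 1)) (C := -δ)
        (fun z hz => ((hflow (k + 1) z ⟨hz.1, hz.2.trans hs.2⟩).1).mono
          (Icc_subset_Icc le_rfl hs.2))
        hbound (t (k + 1)) ⟨le_refl _, hs.1⟩ s ⟨hs.1, le_refl _⟩ hs.1
      nlinarith
  -- lower bound on jump times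
  have htlb : ∀ j : ℕ, (j : ℝ) * τm ≤ t j := by
    intro j
    induction j with
    | zero => simp [ht0]
    | succ k ih =>
      have := hdwell k
      push_cast
      nlinarith
  refine ⟨(M - ε) / δ + ((M - ε) / δ) / τm + 1, fun j s hs hT => ?_⟩
  by_contra h
  push_neg at h
  have h1 : u s j ≤ M - δ * s := hkey j s hs h
  have hsle : s ≤ (M - ε) / δ := by
    rw [le_div_iff₀ hδ]
    linarith
  have hs0 : (j : ℝ) * τm ≤ s := le_trans (htlb j) hs.1
  have hjle : (j : ℝ) ≤ ((M - ε) / δ) / τm := by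
    rw [le_div_iff₀ hτm]
    linarith
  linarith
end
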